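/- arXiv:1711.05112 — 3 statements merged into one kernel-verified Lean document; each statement's English description precedes it below -/
import Mathlib

section
/- Fix integers Q > 2 and n ≥ 1. For a tuple i = (i_1,…,i_Q) with 1 ≤ i_1 ≤ … ≤ i_Q ≤ n that is not constant, define G(i) := max{i_{j+1} − i_j : i_{j+1} − i_j > 0, 1 ≤ j ≤ Q−1} and m(i) := min{j ∈ {1,…,Q−1} : i_{j+1} − i_j = G(i)}. Then for every m ∈ {1,…,Q−1}, every g ∈ {1,…,n} and every l ∈ {1,…,n}, the number of such tuples i with m(i) = m, G(i) = g and i_m = l is at most g^{m−1} · (g+1)^{Q−m−1}. -/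
/-!
A nondecreasing sequence of naturals is determined by any one of its values together with its
gaps. For the tuples being counted, the value `i_m = l` and the gap `G(i) = g` at `m` are fixed,
the `m - 1` gaps before `m` lie in `{0, …, g - 1}` and the `Q - m - 1` gaps after it lie in
`{0, …, g}`; so the remaining gaps inject the set into `{0, …, g - 1}^(m-1) × {0, …, g}^(Q-m-1)`.
-/

open Finset

section Gap

variable {Q : ℕ}

/-- The backward difference `u j - u (j - 1)`; the truncated `j - 1` makes it `0` at `j = 0`. -/
def gap (u : Fin Q → ℕ) (j : Fin Q) : ℕ :=
  u j - u ⟨j.val - 1, lt_of_le_of_lt (Nat.sub_le _ _) j.isLt⟩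

lemma add_gap_of_monotone {u : Fin Q → ℕ} (hu : Monotone u) (j : Fin Q) :
    u ⟨j.val - 1, lt_of_le_of_lt (Nat.sub_le _ _) j.isLt⟩ + gap u j = u j :=
  Nat.add_sub_cancel' (hu (Fin.le_iff_val_le_val.2 (Nat.sub_le _ _)))

theorem eq_of_monotone_of_gap_eq {u v : Fin Q → ℕ} (hu : Monotone u) (hv : Monotone v)
    (hgap : ∀ j : Fin Q, 0 < j.val → gap u j = gap v j) {k : Fin Q} (hk : u k = v k) :
    u = v := by
  have step : ∀ (i : ℕ) (hi : i + 1 < Q),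
      u ⟨i + 1, hi⟩ = v ⟨i + 1, hi⟩ ↔ u ⟨i, by omega⟩ = v ⟨i, by omega⟩ := by
    intro i hi
    have hu' : u ⟨i, by omega⟩ + gap u ⟨i + 1, hi⟩ = u ⟨i + 1, hi⟩ :=
      add_gap_of_monotone hu ⟨i + 1, hi⟩
    have hv' : v ⟨i, by omega⟩ + gap v ⟨i + 1, hi⟩ = v ⟨i + 1, hi⟩ :=
      add_gap_of_monotone hv ⟨i + 1, hi⟩
    rw [hgap _ i.succ_pos] at hu'
    omega
  have iff_at_zero : ∀ (i : ℕ) (hi : i < Q),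
      u ⟨i, hi⟩ = v ⟨i, hi⟩ ↔ u ⟨0, by omega⟩ = v ⟨0, by omega⟩ := by
    intro i
    induction i with
    | zero => intro _; rfl
    | succ i ih => intro hi; exact (step i hi).trans (ih _)
  funext j
  exact (iff_at_zero j j.isLt).2 ((iff_at_zero k k.isLt).1 hk)

def gapCode (m : ℕ) (hmQ : m < Q) (u : Fin Q → ℕ) :
    (Fin (m - 1) → ℕ) × (Fin (Q - m - 1) → ℕ) :=
  (fun a => gap u ⟨a + 1, by omega⟩, fun b => gap u ⟨m + 1 + b, by omega⟩)

lemma gap_eq_of_gapCode_eq {m : ℕ} (hmQ : m < Q) {u v : Fin Q → ℕ}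
    (hcode : gapCode m hmQ u = gapCode m hmQ v) (hgap_m : gap u ⟨m, hmQ⟩ = gap v ⟨m, hmQ⟩) :
    ∀ j : Fin Q, 0 < j.val → gap u j = gap v j := by
  intro j hj
  obtain ⟨hlow, hhigh⟩ := Prod.ext_iff.1 hcode
  rcases lt_trichotomy j.val m with hjm | hjm | hjm
  · have e : (⟨j.val - 1 + 1, by omega⟩ : Fin Q) = j := Fin.ext (by simp only; omega)
    simpa only [gapCode, e] using congrFun hlow ⟨j.val - 1, by omega⟩
  · rwa [show j = ⟨m, hmQ⟩ from Fin.ext hjm]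
  · have e : (⟨m + 1 + (j.val - m - 1), by omega⟩ : Fin Q) = j := Fin.ext (by simp only; omega)
    simpa only [gapCode, e] using congrFun hhigh ⟨j.val - m - 1, by omega⟩

end Gap

/-- Counting lemma from the proof of the moment inequality: the number of
nondecreasing, nonconstant tuples `(i_1,…,i_Q) ∈ {1,…,n}^Q` whose largest gap
is `G(i) = g`, first attained at position `m(i) = m`, and with `i_m = l`, is at
most `g^{m-1} (g+1)^{Q-m-1}`.  Tuples are encoded as monotone maps
`f : Fin Q → Fin n` via `i_r = f (r-1) + 1`; the gap `i_{j+1} - i_j` is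
`f j - f (j-1)` (0-based). -/
theorem stmt_4
    (Q n : ℕ)
    (m g l : ℕ) (hm1 : 1 ≤ m) (hm2 : m ≤ Q - 1) :
    (Finset.univ.filter (fun f : Fin Q → Fin n =>
        -- nondecreasing
        (∀ p q : Fin Q, p ≤ q → f p ≤ f q) ∧
        -- not constant
        (∃ p q : Fin Q, f p ≠ f q) ∧
        -- G(i) = g : every gap is ≤ g …
        (∀ j : Fin Q, 1 ≤ j.val →
          (f j : ℕ) - (f ⟨j.val - 1, lt_of_le_of_lt (Nat.sub_le _ _) j.isLt⟩ : ℕ) ≤ g) ∧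
        -- … and the gap at position m equals g (hence the maximum is g)
        ((f ⟨m, by omega⟩ : ℕ) - (f ⟨m - 1, by omega⟩ : ℕ) = g) ∧
        -- m(i) = m : gaps before position m are < g
        (∀ j : Fin Q, 1 ≤ j.val → j.val < m →
          (f j : ℕ) - (f ⟨j.val - 1, lt_of_le_of_lt (Nat.sub_le _ _) j.isLt⟩ : ℕ) < g) ∧
        -- i_m = l
        ((f ⟨m - 1, by omega⟩ : ℕ) + 1 = l))).card
      ≤ g ^ (m - 1) * (g + 1) ^ (Q - m - 1) := by
  have hmQ : m < Q := by omega
  let code (f : Fin Q → Fin n) := gapCode m hmQ (fun i => (f i : ℕ))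
  let codes := (Fintype.piFinset fun _ : Fin (m - 1) => range g) ×ˢ
    (Fintype.piFinset fun _ : Fin (Q - m - 1) => range (g + 1))
  have hcodes : codes.card = g ^ (m - 1) * (g + 1) ^ (Q - m - 1) := by
    simp [codes, Fintype.card_piFinset]
  refine hcodes ▸ card_le_card_of_injOn code ?maps ?inj
  case maps =>
    intro f hf
    simp only [coe_filter, mem_univ, true_and, Set.mem_ofPred_eq] at hf
    obtain ⟨-, -, hle, -, hlt, -⟩ := hf
    simp only [codes, code, gapCode, coe_product, Set.mem_prod, Fintype.coe_piFinset,
      Set.mem_pi, Set.mem_univ, coe_range, Set.mem_Iio, forall_const]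
    exact ⟨fun a => hlt _ (by simp) (by simp only; omega),
      fun b => Nat.lt_succ_of_le (hle _ (by simp only; omega))⟩
  case inj =>
    intro f₁ hf₁ f₂ hf₂ hcode
    simp only [coe_filter, mem_univ, true_and, Set.mem_ofPred_eq] at hf₁ hf₂
    obtain ⟨hmono₁, -, -, hgap₁, -, hval₁⟩ := hf₁
    obtain ⟨hmono₂, -, -, hgap₂, -, hval₂⟩ := hf₂
    have hvals := eq_of_monotone_of_gap_eq (k := ⟨m - 1, by omega⟩) hmono₁ hmono₂
      (gap_eq_of_gapCode_eq hmQ hcode (hgap₁.trans hgap₂.symm)) (by omega)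
    exact funext fun i => Fin.ext (congrFun hvals i)
end

section
/- Let P be the distribution of a random vector (Y, X) on ℝ × ℝ^d with E[Y²] < ∞. Consider the function class ℱ := {(y,x) ↦ y · 1{x ≤ z} : z ∈ ℝ^d}, where x ≤ z means componentwise inequality. Then there exists a constant C < ∞ such that for every ε ∈ (0,1] there exist N ≤ C ε^{−2d} functions a_1,…,a_N : ℝ × ℝ^d → ℝ and nonnegative measurable functions b_1,…,b_N with E[b_j(Y,X)²]^{1/2} < ε for all j, such that for every φ ∈ ℱ there is an index j with |φ − a_j| ≤ b_j pointwise. In other words, N_[](ε, ℱ, L²(P)) = O(ε^{−2d}) as ε → 0. -/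
/-!
Weight the law by the square of the response, `ρ = Y² · μ`: the `L²(μ)`-size of `|y| · 1_D` is
`ρ(D)^{1/2}`, so it suffices to bracket the orthants `{x ≤ z}` by sets `L ⊆ {x ≤ z} ⊆ L ∪ D` with
`ρ(D) ≤ δ`. Cutting each coordinate axis at the `δ`-quantiles of the corresponding marginal of `ρ`
brackets the half-lines with about `ρ(univ)/δ` pairs; products of these bracket the orthants with
`ρ(D) ≤ d δ`. Taking `δ = ε²/(d+1)` gives `O(ε^{-2d})` brackets.
-/

open MeasureTheory Set Filter Topology ENNReal

structure IsSetBracketing {α Z : Type*} [MeasurableSpace α] (ν : Measure α) (δ : ℝ≥0∞)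
    (S : Z → Set α) (B : Finset (Set α × Set α)) : Prop where
  measurableSet_snd : ∀ b ∈ B, MeasurableSet b.2
  measure_snd_le : ∀ b ∈ B, ν b.2 ≤ δ
  exists_mem : ∀ z, ∃ b ∈ B, b.1 ⊆ S z ∧ S z ⊆ b.1 ∪ b.2

theorem exists_measure_Iio_le_le_measure_Iic {ν : Measure ℝ} [IsFiniteMeasure ν] {δ : ℝ≥0∞}
    (hδ : 0 < δ) (hδν : δ < ν univ) : ∃ t, ν (Iio t) ≤ δ ∧ δ ≤ ν (Iic t) := by
  set S := {s : ℝ | δ ≤ ν (Iic s)}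
  have hS : S.Nonempty :=
    (((tendsto_measure_Iic_atTop ν).eventually (lt_mem_nhds hδν)).mono fun _ h => h.le).exists
  have hSbdd : BddBelow S := by
    have hbot : Tendsto (fun s => ν (Iic s)) atBot (𝓝 0) := by
      have := tendsto_measure_iInter_atBot (μ := ν)
        (fun s : ℝ => measurableSet_Iic.nullMeasurableSet) monotone_Iic ⟨0, measure_ne_top ν _⟩
      rwa [iInter_Iic_eq_empty_iff.mpr
        (not_bddBelow_iff.mpr fun x => ⟨x - 1, ⟨x - 1, rfl⟩, by linarith⟩), measure_empty] at this
    obtain ⟨s₀, hs₀⟩ := eventually_atBot.mp (hbot.eventually (gt_mem_nhds hδ))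
    exact ⟨s₀, fun s hs => le_of_not_ge fun hss => (hs₀ s hss).not_ge hs⟩
  refine ⟨sInf S, ?_, ?_⟩
  · obtain ⟨u, hu_mono, hu_lt, hu_lim⟩ := exists_seq_strictMono_tendsto (sInf S)
    rw [← iUnion_Iic_eq_Iio_of_lt_of_tendsto hu_lt hu_lim,
      Monotone.measure_iUnion fun _ _ h => Iic_subset_Iic.mpr (hu_mono.monotone h)]
    exact iSup_le fun n => le_of_lt <| not_le.mp fun h => (hu_lt n).not_ge (csInf_le hSbdd h)
  · obtain ⟨u, hu_anti, hu_gt, hu_lim⟩ := exists_seq_strictAnti_tendsto (sInf S)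
    have hIic : Iic (sInf S) = ⋂ n, Iic (u n) :=
      ext fun x => ⟨fun hx => mem_iInter.mpr fun n => le_trans hx (hu_gt n).le,
        fun hx => ge_of_tendsto' hu_lim fun n => mem_iInter.mp hx n⟩
    rw [hIic, Antitone.measure_iInter (fun _ _ h => Iic_subset_Iic.mpr (hu_anti.antitone h))
      (fun _ => measurableSet_Iic.nullMeasurableSet) ⟨0, measure_ne_top ν _⟩]
    refine le_iInf fun n => ?_
    obtain ⟨s, hs, hsu⟩ := exists_lt_of_csInf_lt hS (hu_gt n)
    exact hs.trans (measure_mono (Iic_subset_Iic.mpr hsu.le))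

theorem exists_isSetBracketing_Iic_of_measure_univ_le {δ : ℝ≥0∞} (hδ : 0 < δ) {n : ℕ}
    {ν : Measure ℝ} [IsFiniteMeasure ν] (hν : ν univ ≤ (n + 1) * δ) :
    ∃ B : Finset (Set ℝ × Set ℝ), B.card ≤ n + 1 ∧ IsSetBracketing ν δ Iic B := by
  classical
  induction n generalizing ν with
  | zero =>
    exact ⟨{(∅, univ)}, by simp, ⟨by simp, by simpa using hν,
      fun z => ⟨_, Finset.mem_singleton_self _, by simp⟩⟩⟩
  | succ n ih =>
    by_cases hνn : ν univ ≤ (n + 1) * δ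
    · obtain ⟨B, hcard, hB⟩ := ih hνn
      exact ⟨B, hcard.trans n.succ.le_succ, hB⟩
    obtain ⟨t, hIio, hIic⟩ := exists_measure_Iio_le_le_measure_Iic hδ
      (lt_of_le_of_lt (le_mul_of_one_le_left' (by simp)) (not_le.mp hνn))
    have hIoi : ν (Ioi t) ≤ (n + 1) * δ := by
      refine ENNReal.le_of_add_le_add_right (hIic.trans_lt (measure_lt_top ν _)).ne ?_
      calc ν (Ioi t) + δ ≤ ν (Iic t) + ν (Ioi t) := by rw [add_comm]; gcongr
        _ = ν univ := by rw [← compl_Iic, measure_add_measure_compl measurableSet_Iic]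
        _ ≤ (n + 1) * δ + δ := by simpa [add_mul, add_assoc] using hν
    -- `(∅, Iio t)` brackets `Iic z` for `z < t`; for `z ≥ t` prepend `Iic t` to a bracket of
    -- `ν` restricted to `Ioi t`.
    obtain ⟨B, hcard, hB⟩ := ih (ν := ν.restrict (Ioi t)) (by simpa using hIoi)
    refine ⟨insert (∅, Iio t) (B.image fun b => (Iic t ∪ (b.1 ∩ Ioi t), b.2 ∩ Ioi t)),
      (Finset.card_insert_le _ _).trans (Nat.succ_le_succ (Finset.card_image_le.trans hcard)),
      ⟨?_, ?_, fun z => ?_⟩⟩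
    · simp only [Finset.forall_mem_insert, Finset.forall_mem_image]
      exact ⟨measurableSet_Iio, fun b hb => (hB.measurableSet_snd b hb).inter measurableSet_Ioi⟩
    · simp only [Finset.forall_mem_insert, Finset.forall_mem_image]
      refine ⟨hIio, fun b hb => ?_⟩
      rw [← Measure.restrict_apply (hB.measurableSet_snd b hb)]
      exact hB.measure_snd_le b hb
    · rcases lt_or_ge z t with hzt | htz
      · exact ⟨_, Finset.mem_insert_self _ _, empty_subset _, by simpa using Iic_subset_Iio.mpr hzt⟩
      obtain ⟨b, hb, hLS, hSLD⟩ := hB.exists_mem z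
      refine ⟨_, Finset.mem_insert_of_mem (Finset.mem_image_of_mem _ hb),
        union_subset (Iic_subset_Iic.mpr htz) (inter_subset_left.trans hLS), fun x hx => ?_⟩
      rcases le_or_gt x t with hxt | hxt
      · exact Or.inl (Or.inl hxt)
      · rcases hSLD hx with h | h
        exacts [Or.inl (Or.inr ⟨h, hxt⟩), Or.inr ⟨h, hxt⟩]

theorem exists_isSetBracketing_Iic (ν : Measure ℝ) [IsFiniteMeasure ν] {δ : ℝ} (hδ : 0 < δ) :
    ∃ B : Finset (Set ℝ × Set ℝ), (B.card : ℝ) ≤ ν.real univ / δ + 1 ∧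
      IsSetBracketing ν (ENNReal.ofReal δ) Iic B := by
  set n := ⌊ν.real univ / δ⌋₊
  have hν : ν univ ≤ (n + 1) * ENNReal.ofReal δ := by
    rw [← ofReal_measureReal, ← ENNReal.ofReal_natCast, ← ENNReal.ofReal_one,
      ← ENNReal.ofReal_add (by positivity) zero_le_one, ← ENNReal.ofReal_mul (by positivity)]
    exact ENNReal.ofReal_le_ofReal ((div_le_iff₀ hδ).mp (Nat.lt_floor_add_one _).le)
  obtain ⟨B, hcard, hB⟩ := exists_isSetBracketing_Iic_of_measure_univ_le (by simpa using hδ) hν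
  refine ⟨B, ?_, hB⟩
  calc (B.card : ℝ) ≤ n + 1 := by exact_mod_cast hcard
    _ ≤ ν.real univ / δ + 1 := by gcongr; exact Nat.floor_le (by positivity)

theorem IsSetBracketing.exists_iInter_preimage {ι α β Z : Type*} [Fintype ι] [MeasurableSpace α]
    [MeasurableSpace β] {ν : Measure α} {f : ι → α → β} (hf : ∀ k, Measurable (f k))
    {δ : ℝ≥0∞} {S : Z → Set β} {B : ι → Finset (Set β × Set β)}
    (hB : ∀ k, IsSetBracketing (ν.map (f k)) δ S (B k)) :
    ∃ B' : Finset (Set α × Set α), B'.card ≤ ∏ k, (B k).card ∧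
      IsSetBracketing ν (Fintype.card ι * δ) (fun z : ι → Z => ⋂ k, f k ⁻¹' S (z k)) B' := by
  classical
  refine ⟨(Fintype.piFinset B).image fun c => (⋂ k, f k ⁻¹' (c k).1, ⋃ k, f k ⁻¹' (c k).2),
    Finset.card_image_le.trans (Fintype.card_piFinset B).le, ⟨?_, ?_, fun z => ?_⟩⟩
  · simp only [Finset.forall_mem_image, Fintype.mem_piFinset]
    exact fun c hc => MeasurableSet.iUnion fun k => hf k ((hB k).measurableSet_snd _ (hc k))
  · simp only [Finset.forall_mem_image, Fintype.mem_piFinset]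
    intro c hc
    calc ν (⋃ k, f k ⁻¹' (c k).2) ≤ ∑ k, ν (f k ⁻¹' (c k).2) := measure_iUnion_fintype_le ν _
      _ = ∑ k, ν.map (f k) (c k).2 := by
          simp only [Measure.map_apply (hf _) ((hB _).measurableSet_snd _ (hc _))]
      _ ≤ ∑ _k : ι, δ := Finset.sum_le_sum fun k _ => (hB k).measure_snd_le _ (hc k)
      _ = Fintype.card ι * δ := by simp [nsmul_eq_mul]
  · choose c hc hcS hcD using fun k => (hB k).exists_mem (z k)
    refine ⟨_, Finset.mem_image_of_mem _ (Fintype.mem_piFinset.mpr hc),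
      iInter_mono fun k => preimage_mono (hcS k), fun x hx => ?_⟩
    simp only [mem_iInter, mem_preimage] at hx
    by_cases hL : ∀ k, f k x ∈ (c k).1
    · exact Or.inl (mem_iInter.mpr hL)
    · obtain ⟨k, hk⟩ := not_forall.mp hL
      exact Or.inr (mem_iUnion.mpr ⟨k, ((hcD k) (hx k)).resolve_left hk⟩)

theorem exists_isSetBracketing_iInter_preimage_Iic {ι α : Type*} [Fintype ι] [MeasurableSpace α]
    (ν : Measure α) [IsFiniteMeasure ν] {f : ι → α → ℝ} (hf : ∀ k, Measurable (f k)) {δ : ℝ}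
    (hδ : 0 < δ) :
    ∃ B : Finset (Set α × Set α), (B.card : ℝ) ≤ (ν.real univ / δ + 1) ^ Fintype.card ι ∧
      IsSetBracketing ν (Fintype.card ι * ENNReal.ofReal δ)
        (fun z : ι → ℝ => ⋂ k, f k ⁻¹' Iic (z k)) B := by
  choose B hBcard hB using fun k => exists_isSetBracketing_Iic (ν.map (f k)) hδ
  obtain ⟨B', hB'card, hB'⟩ := IsSetBracketing.exists_iInter_preimage hf hB
  refine ⟨B', ?_, hB'⟩
  calc (B'.card : ℝ) ≤ ∏ k, ((B k).card : ℝ) := by exact_mod_cast hB'card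
    _ ≤ ∏ _k : ι, (ν.real univ / δ + 1) :=
        Finset.prod_le_prod (fun _ _ => by positivity) fun k _ => by
          simpa [map_measureReal_apply (hf k) MeasurableSet.univ] using hBcard k
    _ = (ν.real univ / δ + 1) ^ Fintype.card ι := by simp

theorem abs_indicator_sub_indicator_le {α : Type*} {A L D : Set α} (hLA : L ⊆ A)
    (hAD : A ⊆ L ∪ D) (g : α → ℝ) (x : α) :
    |A.indicator g x - L.indicator g x| ≤ D.indicator (fun x => |g x|) x := by
  by_cases hL : x ∈ L
  · simp [hL, hLA hL, indicator_nonneg]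
  by_cases hA : x ∈ A
  · simp [hL, hA, (hAD hA).resolve_left hL]
  · simp [hL, hA, indicator_nonneg]

theorem sq_indicator_abs {α : Type*} (D : Set α) (g : α → ℝ) (x : α) :
    D.indicator (fun x => |g x|) x ^ 2 = D.indicator (fun x => g x ^ 2) x := by
  by_cases hx : x ∈ D <;> simp [hx]

section WeightedMeasure

variable {α : Type*} [MeasurableSpace α] {μ : Measure α} {g : α → ℝ} {D : Set α}

theorem integrable_sq_indicator_abs (hg : Integrable (fun x => g x ^ 2) μ)
    (hD : MeasurableSet D) : Integrable (fun x => D.indicator (fun x => |g x|) x ^ 2) μ := by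
  simpa only [sq_indicator_abs] using hg.indicator hD

theorem integral_sq_indicator_abs (hg : Integrable (fun x => g x ^ 2) μ)
    (hD : MeasurableSet D) :
    ∫ x, D.indicator (fun x => |g x|) x ^ 2 ∂μ =
      (μ.withDensity fun x => ENNReal.ofReal (g x ^ 2)).real D := by
  simp only [sq_indicator_abs, integral_indicator hD, measureReal_def, withDensity_apply _ hD]
  rw [← ofReal_integral_eq_lintegral_ofReal hg.integrableOn (ae_of_all _ fun x => sq_nonneg _),
    ENNReal.toReal_ofReal (setIntegral_nonneg hD fun x _ => sq_nonneg (g x))]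

end WeightedMeasure

theorem div_sq_div_add_one_pow_le {T ε : ℝ} (hT : 0 ≤ T) (hε : 0 < ε) (hε1 : ε ≤ 1) (d : ℕ) :
    (T / (ε ^ 2 / (d + 1)) + 1) ^ d ≤ ((d + 1) * T + 1) ^ d * ε ^ (-(2 * d : ℝ)) := by
  calc (T / (ε ^ 2 / (d + 1)) + 1) ^ d ≤ (((d + 1) * T + 1) / ε ^ 2) ^ d := by
        rw [div_div_eq_mul_div, add_div, mul_comm]
        gcongr
        exact (one_le_div (by positivity)).mpr (pow_le_one₀ hε.le hε1)
    _ = ((d + 1) * T + 1) ^ d * ε ^ (-(2 * d : ℝ)) := by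
        rw [div_pow, ← pow_mul, Real.rpow_neg hε.le, div_eq_mul_inv,
          show (2 * d : ℝ) = ((2 * d : ℕ) : ℝ) by push_cast; ring, Real.rpow_natCast]

theorem stmt_9_general
    (d : ℕ) (μ : Measure (ℝ × (Fin d → ℝ)))
    (hY2 : Integrable (fun p => p.1 ^ 2) μ) :
    ∃ C : ℝ, 0 < C ∧ ∀ ε : ℝ, 0 < ε → ε ≤ 1 →
      ∃ N : ℕ, (N : ℝ) ≤ C * ε ^ (-(2 * d : ℝ)) ∧
      ∃ a b : Fin N → (ℝ × (Fin d → ℝ) → ℝ),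
        (∀ j : Fin N, Measurable (b j) ∧ (∀ p, 0 ≤ b j p) ∧
          Integrable (fun p => (b j p) ^ 2) μ ∧
          (∫ p, (b j p) ^ 2 ∂μ) ^ (1 / 2 : ℝ) < ε) ∧
        ∀ z : Fin d → ℝ, ∃ j : Fin N, ∀ p : ℝ × (Fin d → ℝ),
          |p.1 * (if ∀ k, p.2 k ≤ z k then (1 : ℝ) else 0) - a j p| ≤ b j p := by
  classical
  set ρ := μ.withDensity fun p => ENNReal.ofReal (p.1 ^ 2)
  have : IsFiniteMeasure ρ := isFiniteMeasure_withDensity_ofReal hY2.hasFiniteIntegral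
  refine ⟨((d + 1) * ρ.real univ + 1) ^ d, by positivity, fun ε hε hε1 => ?_⟩
  have hδ : 0 < ε ^ 2 / (d + 1) := by positivity
  obtain ⟨B, hBcard, hB⟩ := exists_isSetBracketing_iInter_preimage_Iic ρ
    (f := fun k p => p.2 k) (fun k => (measurable_pi_apply k).comp measurable_snd) hδ
  let e := B.equivFin.symm
  refine ⟨B.card, ?_, fun j => (e j).1.1.indicator Prod.fst,
    fun j => (e j).1.2.indicator fun p => |p.1|, fun j => ?_, fun z => ?_⟩
  · rw [Fintype.card_fin] at hBcard
    exact hBcard.trans (div_sq_div_add_one_pow_le measureReal_nonneg hε hε1 d)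
  · have hD := hB.measurableSet_snd _ (e j).2
    refine ⟨measurable_fst.abs.indicator hD, indicator_nonneg fun _ _ => abs_nonneg _,
      integrable_sq_indicator_abs hY2 hD, ?_⟩
    rw [integral_sq_indicator_abs hY2 hD, ← Real.sqrt_eq_rpow, Real.sqrt_lt' hε]
    calc ρ.real _ ≤ (Fintype.card (Fin d) * ENNReal.ofReal (ε ^ 2 / (d + 1))).toReal :=
          ENNReal.toReal_mono (by finiteness) (hB.measure_snd_le _ (e j).2)
      _ = d * (ε ^ 2 / (d + 1)) := by simp [hδ.le]
      _ < ε ^ 2 := by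
          rw [mul_div_assoc', div_lt_iff₀ (by positivity)]
          nlinarith
  · obtain ⟨b, hb, hLS, hSLD⟩ := hB.exists_mem z
    refine ⟨B.equivFin ⟨b, hb⟩, fun p => ?_⟩
    convert abs_indicator_sub_indicator_le hLS hSLD Prod.fst p using 3
    · simp [indicator_apply]
    · simp [e]
    · simp [e]

/-- Bracketing bound for the class `ℱ = {(y,x) ↦ y·1{x ≤ z} : z ∈ ℝ^d}`:
`N_[](ε, ℱ, L²(P)) = O(ε^{-2d})`. -/
theorem stmt_9
    (d : ℕ) (μ : Measure (ℝ × (Fin d → ℝ))) [IsProbabilityMeasure μ]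
    (hY2 : Integrable (fun p => p.1 ^ 2) μ) :
    ∃ C : ℝ, 0 < C ∧ ∀ ε : ℝ, 0 < ε → ε ≤ 1 →
      ∃ N : ℕ, (N : ℝ) ≤ C * ε ^ (-(2 * d : ℝ)) ∧
      ∃ a b : Fin N → (ℝ × (Fin d → ℝ) → ℝ),
        (∀ j : Fin N, Measurable (b j) ∧ (∀ p, 0 ≤ b j p) ∧
          Integrable (fun p => (b j p) ^ 2) μ ∧
          (∫ p, (b j p) ^ 2 ∂μ) ^ (1 / 2 : ℝ) < ε) ∧
        ∀ z : Fin d → ℝ, ∃ j : Fin N, ∀ p : ℝ × (Fin d → ℝ),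
          |p.1 * (if ∀ k, p.2 k ≤ z k then (1 : ℝ) else 0) - a j p| ≤ b j p :=
  stmt_9_general d μ hY2
end

section
/- Let {X_t : t ∈ ℤ} be i.i.d. ℝ^d-valued random vectors with distribution function F_X, and let {ε_t : t ∈ ℤ} be a strictly stationary real-valued sequence, mutually independent of {X_t}, with E[ε_t | σ(ε_j : j ≤ t−1)] = 0 for all t and E[ε_1²] = 1. Let m, σ : ℝ^d → ℝ be measurable with ∫ m² dF_X < ∞ and ∫ σ² dF_X < ∞, and set Y_t := m(X_t) + σ(X_t) ε_t. Define α_n(1,z) := n^{−1/2} Σ_{i=1}^n (Y_i 1{X_i ≤ z} − E[Y_i 1{X_i ≤ z}]) for z ∈ ℝ^d (componentwise ≤). Then for every n ∈ ℕ and all z_1, z_2 ∈ ℝ^d, E[α_n(1,z_1) α_n(1,z_2)] = H_1(z_1 ∧ z_2) + H_2(z_1 ∧ z_2) − G_1(z_1) G_1(z_2), where z_1 ∧ z_2 is the componentwise minimum, H_1(z) := ∫_{(−∞,z]} m²(u) dF_X(u), H_2(z) := ∫_{(−∞,z]} σ²(u) dF_X(u) and G_1(z) := ∫_{(−∞,z]}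 m(u) dF_X(u). -/
/-!
Write the `i`-th summand as `a_i(z) + b_i(z) ε_i` with `a_i(z) = m(X_i) 1{X_i ≤ z}` and
`b_i(z) = σ(X_i) 1{X_i ≤ z}`. Because the regressors are independent of the innovations and the
`ε_i` are centred, `Cov(a_i(z₁) + b_i(z₁) ε_i, a_j(z₂) + b_j(z₂) ε_j)` equals
`Cov(a_i(z₁), a_j(z₂)) + E[b_i(z₁) b_j(z₂)] E[ε_i ε_j]`. The martingale-difference property makes
the innovations uncorrelated and stationarity gives `E ε_i² = E ε_1² = 1`, while independence of
the `X_i` kills `Cov(a_i, a_j)` for `i ≠ j`. So only the `n` diagonal terms survive, each equal to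
`H₁(z₁ ∧ z₂) + H₂(z₁ ∧ z₂) - G₁(z₁) G₁(z₂)`, and the factor `n^{-1/2} · n^{-1/2}` averages them.
-/

open MeasureTheory ProbabilityTheory Finset

section Covariance

variable {Ω ι : Type*} [MeasurableSpace Ω] {P : Measure Ω} [IsProbabilityMeasure P]
  {s : Finset ι} {f g : ι → Ω → ℝ}

lemma integral_sum_sub_integral_eq_zero (hf : ∀ i ∈ s, Integrable (f i) P) :
    ∫ ω, ∑ i ∈ s, (f i ω - P[f i]) ∂P = 0 := by
  rw [integral_finsetSum (f := fun i ω => f i ω - P[f i]) s fun i hi =>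
    (hf i hi).sub (integrable_const _)]
  exact sum_eq_zero fun i hi => by simp [integral_sub (hf i hi) (integrable_const _)]

lemma integral_sum_sub_mul_sum_sub_eq_sum_covariance (hf : ∀ i ∈ s, MemLp (f i) 2 P)
    (hg : ∀ j ∈ s, MemLp (g j) 2 P) :
    ∫ ω, (∑ i ∈ s, (f i ω - P[f i])) * (∑ j ∈ s, (g j ω - P[g j])) ∂P
      = ∑ i ∈ s, ∑ j ∈ s, cov[f i, g j; P] := by
  have hcov := covariance_fun_sum_fun_sum' (X := fun i ω => f i ω - P[f i])
    (Y := fun j ω => g j ω - P[g j]) (fun i hi => (hf i hi).sub (memLp_const _))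
    (fun j hj => (hg j hj).sub (memLp_const _))
  simp only [covariance, sub_zero, integral_sum_sub_integral_eq_zero
    fun i hi => (hf i hi).integrable one_le_two, integral_sum_sub_integral_eq_zero
    fun j hj => (hg j hj).integrable one_le_two] at hcov
  rw [hcov]
  refine sum_congr rfl fun i hi => sum_congr rfl fun j hj => ?_
  rw [← covariance, covariance_sub_const_left ((hf i hi).integrable one_le_two),
    covariance_sub_const_right ((hg j hj).integrable one_le_two)]

lemma integral_normalized_sum_mul_of_covariance_eq_ite [DecidableEq ι] (hs : s.Nonempty)
    (hf : ∀ i ∈ s, MemLp (f i) 2 P) (hg : ∀ j ∈ s, MemLp (g j) 2 P) {c : ℝ}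
    (hcov : ∀ i ∈ s, ∀ j ∈ s, cov[f i, g j; P] = if i = j then c else 0) :
    ∫ ω, ((#s : ℝ) ^ (-(1 / 2 : ℝ)) * ∑ i ∈ s, (f i ω - P[f i]))
      * ((#s : ℝ) ^ (-(1 / 2 : ℝ)) * ∑ j ∈ s, (g j ω - P[g j])) ∂P = c := by
  have hpos : (0 : ℝ) < #s := by exact_mod_cast hs.card_pos
  have hscale : (#s : ℝ) ^ (-(1 / 2 : ℝ)) * (#s : ℝ) ^ (-(1 / 2 : ℝ)) = (#s : ℝ)⁻¹ := by
    rw [← Real.rpow_add hpos]; norm_num [Real.rpow_neg_one]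
  have hrow : ∀ i ∈ s, ∑ j ∈ s, cov[f i, g j; P] = c := fun i hi => by
    rw [sum_congr rfl (hcov i hi), sum_ite_eq, if_pos hi]
  simp_rw [mul_mul_mul_comm _ (∑ i ∈ s, _), hscale]
  rw [integral_const_mul, integral_sum_sub_mul_sum_sub_eq_sum_covariance hf hg, sum_congr rfl hrow,
    sum_const, nsmul_eq_mul, inv_mul_cancel_left₀ hpos.ne']

end Covariance

section Independent

variable {Ω : Type*} {𝓕 𝓖 : MeasurableSpace Ω} [MeasurableSpace Ω] {P : Measure Ω}

lemma ProbabilityTheory.Indep.indepFun_of_measurable (hind : Indep 𝓕 𝓖 P) {φ ψ : Ω → ℝ}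
    (hφ : Measurable[𝓕] φ) (hψ : Measurable[𝓖] ψ) : IndepFun φ ψ P :=
  indep_of_indep_of_le_right (indep_of_indep_of_le_left hind hφ.comap_le) hψ.comap_le

lemma ProbabilityTheory.Indep.integrable_mul_of_measurable (hind : Indep 𝓕 𝓖 P)
    {φ ψ : Ω → ℝ} (hφ : Measurable[𝓕] φ) (hψ : Measurable[𝓖] ψ) (hφi : Integrable φ P)
    (hψi : Integrable ψ P) : Integrable (φ * ψ) P :=
  (hind.indepFun_of_measurable hφ hψ).integrable_mul hφi hψi

lemma ProbabilityTheory.Indep.integral_mul_of_measurable (hind : Indep 𝓕 𝓖 P)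
    {φ ψ : Ω → ℝ} (hφ : Measurable[𝓕] φ) (hψ : Measurable[𝓖] ψ)
    (hφm : AEStronglyMeasurable φ P) (hψm : AEStronglyMeasurable ψ P) :
    P[φ * ψ] = P[φ] * P[ψ] :=
  (hind.indepFun_of_measurable hφ hψ).integral_mul_eq_mul_integral hφm hψm

lemma ProbabilityTheory.Indep.memLp_mul_of_measurable (hind : Indep 𝓕 𝓖 P) {b e : Ω → ℝ}
    (hb : Measurable[𝓕] b) (he : Measurable[𝓖] e) (hb2 : MemLp b 2 P) (he2 : MemLp e 2 P) :
    MemLp (b * e) 2 P := by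
  refine (memLp_two_iff_integrable_sq (hb2.1.mul he2.1)).2 ?_
  simp_rw [Pi.mul_apply, mul_pow]
  exact (hind.indepFun_of_measurable (hb.pow_const 2) (he.pow_const 2)).integrable_mul
    hb2.integrable_sq he2.integrable_sq

lemma ProbabilityTheory.Indep.integral_add_mul_mul_add_mul [IsProbabilityMeasure P]
    (hind : Indep 𝓕 𝓖 P) {a₁ a₂ b₁ b₂ e₁ e₂ : Ω → ℝ}
    (ha₁ : Measurable[𝓕] a₁) (ha₂ : Measurable[𝓕] a₂)
    (hb₁ : Measurable[𝓕] b₁) (hb₂ : Measurable[𝓕] b₂)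
    (he₁ : Measurable[𝓖] e₁) (he₂ : Measurable[𝓖] e₂)
    (ha₁' : MemLp a₁ 2 P) (ha₂' : MemLp a₂ 2 P) (hb₁' : MemLp b₁ 2 P) (hb₂' : MemLp b₂ 2 P)
    (he₁' : MemLp e₁ 2 P) (he₂' : MemLp e₂ 2 P) (he₁0 : P[e₁] = 0) (he₂0 : P[e₂] = 0) :
    P[(a₁ + b₁ * e₁) * (a₂ + b₂ * e₂)] = P[a₁ * a₂] + P[b₁ * b₂] * P[e₁ * e₂] := by
  have hi₁ := he₁'.integrable one_le_two
  have hi₂ := he₂'.integrable one_le_two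
  have hexpand : (a₁ + b₁ * e₁) * (a₂ + b₂ * e₂)
      = a₁ * a₂ + (a₁ * b₂) * e₂ + (b₁ * a₂) * e₁ + (b₁ * b₂) * (e₁ * e₂) := by ring
  have hab := ha₁.mul hb₂
  have hba := hb₁.mul ha₂
  have hbb := hb₁.mul hb₂
  have hee := he₁.mul he₂
  have iaa := ha₁'.integrable_mul ha₂'
  have iabe := hind.integrable_mul_of_measurable hab he₂ (ha₁'.integrable_mul hb₂') hi₂
  have ibae := hind.integrable_mul_of_measurable hba he₁ (hb₁'.integrable_mul ha₂') hi₁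
  have ibbee := hind.integrable_mul_of_measurable hbb hee (hb₁'.integrable_mul hb₂')
    (he₁'.integrable_mul he₂')
  rw [hexpand, integral_add' ((iaa.add iabe).add ibae) ibbee, integral_add' (iaa.add iabe) ibae,
    integral_add' iaa iabe,
    hind.integral_mul_of_measurable hab he₂ (ha₁'.1.mul hb₂'.1) he₂'.1,
    hind.integral_mul_of_measurable hba he₁ (hb₁'.1.mul ha₂'.1) he₁'.1,
    hind.integral_mul_of_measurable hbb hee (hb₁'.1.mul hb₂'.1) (he₁'.1.mul he₂'.1),
    he₁0, he₂0, mul_zero, mul_zero, add_zero, add_zero]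

lemma ProbabilityTheory.Indep.integral_add_mul [IsProbabilityMeasure P] (hind : Indep 𝓕 𝓖 P)
    {a b e : Ω → ℝ} (hb : Measurable[𝓕] b) (he : Measurable[𝓖] e) (ha' : Integrable a P)
    (hb' : Integrable b P) (he' : Integrable e P) (he0 : P[e] = 0) :
    P[a + b * e] = P[a] := by
  rw [integral_add' ha' (hind.integrable_mul_of_measurable hb he hb' he'),
    hind.integral_mul_of_measurable hb he hb'.1 he'.1, he0, mul_zero, add_zero]

lemma ProbabilityTheory.Indep.covariance_add_mul_add_mul [IsProbabilityMeasure P]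
    (hind : Indep 𝓕 𝓖 P) {a₁ a₂ b₁ b₂ e₁ e₂ : Ω → ℝ}
    (ha₁ : Measurable[𝓕] a₁) (ha₂ : Measurable[𝓕] a₂)
    (hb₁ : Measurable[𝓕] b₁) (hb₂ : Measurable[𝓕] b₂)
    (he₁ : Measurable[𝓖] e₁) (he₂ : Measurable[𝓖] e₂)
    (ha₁' : MemLp a₁ 2 P) (ha₂' : MemLp a₂ 2 P) (hb₁' : MemLp b₁ 2 P) (hb₂' : MemLp b₂ 2 P)
    (he₁' : MemLp e₁ 2 P) (he₂' : MemLp e₂ 2 P) (he₁0 : P[e₁] = 0) (he₂0 : P[e₂] = 0) :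
    cov[a₁ + b₁ * e₁, a₂ + b₂ * e₂; P] = cov[a₁, a₂; P] + P[b₁ * b₂] * P[e₁ * e₂] := by
  rw [covariance_eq_sub (ha₁'.add (hind.memLp_mul_of_measurable hb₁ he₁ hb₁' he₁'))
      (ha₂'.add (hind.memLp_mul_of_measurable hb₂ he₂ hb₂' he₂')),
    hind.integral_add_mul_mul_add_mul ha₁ ha₂ hb₁ hb₂ he₁ he₂ ha₁' ha₂' hb₁' hb₂' he₁' he₂'
      he₁0 he₂0,
    hind.integral_add_mul hb₁ he₁ (ha₁'.integrable one_le_two) (hb₁'.integrable one_le_two)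
      (he₁'.integrable one_le_two) he₁0,
    hind.integral_add_mul hb₂ he₂ (ha₂'.integrable one_le_two) (hb₂'.integrable one_le_two)
      (he₂'.integrable one_le_two) he₂0, covariance_eq_sub ha₁' ha₂']
  ring

end Independent

section IID

variable {Ω E ι : Type*} [MeasurableSpace Ω] [MeasurableSpace E] {P : Measure Ω}
  {X : ι → Ω → E} {ν : Measure E}

lemma covariance_comp_comp_of_iIndepFun [DecidableEq ι] (hXm : ∀ i, Measurable (X i))
    (hXindep : iIndepFun X P) (hν : ∀ i, P.map (X i) = ν) {φ ψ : E → ℝ}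
    (hφ : Measurable φ) (hψ : Measurable ψ) (hφ2 : MemLp φ 2 ν) (hψ2 : MemLp ψ 2 ν) (i j : ι) :
    cov[φ ∘ X i, ψ ∘ X j; P] = if i = j then cov[φ, ψ; ν] else 0 := by
  split_ifs with hij
  · subst hij
    rw [← hν i, covariance_map (hν i ▸ hφ2.1) (hν i ▸ hψ2.1) (hXm i).aemeasurable]
  · exact ((hXindep.indepFun hij).comp hφ hψ).covariance_eq_zero
      ((hν i ▸ hφ2).comp_of_map (hXm i).aemeasurable)
      ((hν j ▸ hψ2).comp_of_map (hXm j).aemeasurable)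

lemma integral_indicator_mul_indicator {ν : Measure E} {s t : Set E} (hs : MeasurableSet s)
    (ht : MeasurableSet t) (φ : E → ℝ) :
    ν[s.indicator φ * t.indicator φ] = ∫ u in s ∩ t, φ u ^ 2 ∂ν := by
  simp_rw [Pi.mul_apply, ← Set.inter_indicator_mul, ← sq]
  exact integral_indicator (hs.inter ht)

lemma covariance_indicator_indicator {ν : Measure E} [IsProbabilityMeasure ν] {s t : Set E}
    (hs : MeasurableSet s) (ht : MeasurableSet t) {φ : E → ℝ} (hφ : MemLp φ 2 ν) :
    cov[s.indicator φ, t.indicator φ; ν]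
      = ∫ u in s ∩ t, φ u ^ 2 ∂ν - (∫ u in s, φ u ∂ν) * ∫ u in t, φ u ∂ν := by
  rw [covariance_eq_sub (hφ.indicator hs) (hφ.indicator ht),
    integral_indicator_mul_indicator hs ht, integral_indicator hs, integral_indicator ht]

end IID

lemma map_shift_eq_of_stationary {Ω β : Type*} [MeasurableSpace Ω] [MeasurableSpace β]
    {P : Measure Ω} {ε : ℤ → Ω → β} (hεm : ∀ t, Measurable (ε t))
    (hstat : ∀ (m : ℕ) (t : Fin m → ℤ) (k : ℤ),
      Measure.map (fun ω (r : Fin m) => ε (t r + k) ω) P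
        = Measure.map (fun ω (r : Fin m) => ε (t r) ω) P) (t k : ℤ) :
    P.map (ε (t + k)) = P.map (ε t) := by
  have h := congrArg (Measure.map fun v : Fin 1 → β => v 0) (hstat 1 (fun _ => t) k)
  rwa [Measure.map_map (measurable_pi_apply 0) (measurable_pi_lambda _ fun _ => hεm _),
    Measure.map_map (measurable_pi_apply 0) (measurable_pi_lambda _ fun _ => hεm _)] at h

section MartingaleDifference

variable {Ω : Type*} [MeasurableSpace Ω] {P : Measure Ω} [IsFiniteMeasure P] {ε : ℤ → Ω → ℝ}

lemma integral_eq_zero_of_mds (hεm : ∀ t, Measurable (ε t))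
    (hmds : ∀ t : ℤ, P[ε t | ⨆ j : ℤ, ⨆ _ : j ≤ t - 1, MeasurableSpace.comap (ε j) inferInstance]
      =ᵐ[P] fun _ => (0 : ℝ)) (t : ℤ) :
    P[ε t] = 0 := by
  rw [← integral_condExp (iSup₂_le fun j _ => (hεm j).comap_le), integral_congr_ae (hmds t),
    integral_zero]

lemma integral_mul_eq_zero_of_mds (hεm : ∀ t, Measurable (ε t))
    (hmds : ∀ t : ℤ, P[ε t | ⨆ j : ℤ, ⨆ _ : j ≤ t - 1, MeasurableSpace.comap (ε j) inferInstance]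
      =ᵐ[P] fun _ => (0 : ℝ)) (hε2 : ∀ t, MemLp (ε t) 2 P) {s t : ℤ} (hst : s < t) :
    P[ε s * ε t] = 0 := by
  have hs : Measurable[⨆ j : ℤ, ⨆ _ : j ≤ t - 1, MeasurableSpace.comap (ε j) inferInstance] (ε s) :=
    (comap_measurable _).mono (le_iSup₂ (f := fun (j : ℤ) (_ : j ≤ t - 1) =>
      MeasurableSpace.comap (ε j) inferInstance) s (by omega)) le_rfl
  have hpull := condExp_mul_of_stronglyMeasurable_left hs.stronglyMeasurable
    ((hε2 s).integrable_mul (hε2 t)) ((hε2 t).integrable one_le_two)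
  rw [← integral_condExp (iSup₂_le fun j _ => (hεm j).comap_le), integral_congr_ae hpull]
  refine integral_eq_zero_of_ae ?_
  filter_upwards [hmds t] with ω hω
  simp only [Pi.mul_apply, hω, mul_zero, Pi.zero_apply]

lemma integral_mul_eq_ite_of_stationary_mds (hεm : ∀ t, Measurable (ε t))
    (hstat : ∀ (m : ℕ) (t : Fin m → ℤ) (k : ℤ),
      Measure.map (fun ω (r : Fin m) => ε (t r + k) ω) P
        = Measure.map (fun ω (r : Fin m) => ε (t r) ω) P)
    (hmds : ∀ t : ℤ, P[ε t | ⨆ j : ℤ, ⨆ _ : j ≤ t - 1, MeasurableSpace.comap (ε j) inferInstance]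
      =ᵐ[P] fun _ => (0 : ℝ)) (hε2 : ∀ t, MemLp (ε t) 2 P) (s t : ℤ) :
    P[ε s * ε t] = if s = t then ∫ ω, ε 1 ω ^ 2 ∂P else 0 := by
  split_ifs with hst
  · subst hst
    have hsq : Measurable fun x : ℝ => x ^ 2 := measurable_id.pow_const 2
    have h := map_shift_eq_of_stationary hεm hstat 1 (s - 1)
    rw [add_sub_cancel] at h
    simp_rw [Pi.mul_apply, ← sq]
    rw [← integral_map (hεm s).aemeasurable hsq.aestronglyMeasurable, h,
      integral_map (hεm 1).aemeasurable hsq.aestronglyMeasurable]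
  · rcases lt_or_gt_of_ne hst with hlt | hgt
    · exact integral_mul_eq_zero_of_mds hεm hmds hε2 hlt
    · rw [mul_comm]; exact integral_mul_eq_zero_of_mds hεm hmds hε2 hgt

end MartingaleDifference

lemma measurable_iSup_comap {Ω β ι : Type*} [MeasurableSpace β] (Z : ι → Ω → β) (i : ι) :
    Measurable[⨆ i, MeasurableSpace.comap (Z i) inferInstance] (Z i) :=
  (comap_measurable _).mono (le_iSup (fun i => MeasurableSpace.comap (Z i) _) i) le_rfl

lemma add_mul_mul_ite_eq_indicator {d : ℕ} (φ ψ : (Fin d → ℝ) → ℝ) (z x : Fin d → ℝ) (e : ℝ) :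
    (φ x + ψ x * e) * (if ∀ k, x k ≤ z k then (1 : ℝ) else 0)
      = {u | ∀ k, u k ≤ z k}.indicator φ x + {u | ∀ k, u k ≤ z k}.indicator ψ x * e := by
  by_cases h : ∀ k, x k ≤ z k
  · rw [if_pos h, Set.indicator_of_mem (Set.mem_ofPred.2 h),
      Set.indicator_of_mem (Set.mem_ofPred.2 h), mul_one]
  · rw [if_neg h, Set.indicator_of_notMem (Set.notMem_ofPred_iff.2 h),
      Set.indicator_of_notMem (Set.notMem_ofPred_iff.2 h), mul_zero, zero_mul, add_zero]

section Regression

variable {Ω E ι : Type*} [MeasurableSpace Ω] [MeasurableSpace E] {P : Measure Ω}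
  {X : ι → Ω → E} {ε : ι → Ω → ℝ} {ν : Measure E}

lemma memLp_regression_summand (hXm : ∀ i, Measurable (X i)) (hν : ∀ i, P.map (X i) = ν)
    (hindep : Indep (⨆ i, MeasurableSpace.comap (X i) inferInstance)
      (⨆ i, MeasurableSpace.comap (ε i) inferInstance) P)
    (hε2 : ∀ i, MemLp (ε i) 2 P) {φ ψ : E → ℝ} (hψ : Measurable ψ) (hφ' : MemLp φ 2 ν)
    (hψ' : MemLp ψ 2 ν) (i : ι) :
    MemLp (fun ω => φ (X i ω) + ψ (X i ω) * ε i ω) 2 P :=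
  ((hν i ▸ hφ').comp_of_map (hXm i).aemeasurable).add
    (hindep.memLp_mul_of_measurable (hψ.comp (measurable_iSup_comap X i))
      (measurable_iSup_comap ε i) ((hν i ▸ hψ').comp_of_map (hXm i).aemeasurable) (hε2 i))

lemma covariance_regression_summands [IsProbabilityMeasure P] [DecidableEq ι]
    (hXm : ∀ i, Measurable (X i)) (hXindep : iIndepFun X P) (hν : ∀ i, P.map (X i) = ν)
    (hindep : Indep (⨆ i, MeasurableSpace.comap (X i) inferInstance)
      (⨆ i, MeasurableSpace.comap (ε i) inferInstance) P)
    (hε2 : ∀ i, MemLp (ε i) 2 P) (hε0 : ∀ i, P[ε i] = 0)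
    (hεε : ∀ i j, P[ε i * ε j] = if i = j then 1 else 0) {φ₁ φ₂ ψ₁ ψ₂ : E → ℝ}
    (hφ₁ : Measurable φ₁) (hφ₂ : Measurable φ₂) (hψ₁ : Measurable ψ₁) (hψ₂ : Measurable ψ₂)
    (hφ₁' : MemLp φ₁ 2 ν) (hφ₂' : MemLp φ₂ 2 ν) (hψ₁' : MemLp ψ₁ 2 ν) (hψ₂' : MemLp ψ₂ 2 ν)
    (i j : ι) :
    cov[fun ω => φ₁ (X i ω) + ψ₁ (X i ω) * ε i ω, fun ω => φ₂ (X j ω) + ψ₂ (X j ω) * ε j ω; P]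
      = if i = j then cov[φ₁, φ₂; ν] + ν[ψ₁ * ψ₂] else 0 := by
  have hX := measurable_iSup_comap X
  have hε := measurable_iSup_comap ε
  have hL : ∀ {φ : E → ℝ} i, MemLp φ 2 ν → MemLp (fun ω => φ (X i ω)) 2 P :=
    fun i hφ => (hν i ▸ hφ).comp_of_map (hXm i).aemeasurable
  refine (hindep.covariance_add_mul_add_mul (hφ₁.comp (hX i)) (hφ₂.comp (hX j))
    (hψ₁.comp (hX i)) (hψ₂.comp (hX j)) (hε i) (hε j) (hL i hφ₁') (hL j hφ₂') (hL i hψ₁')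
    (hL j hψ₂') (hε2 i) (hε2 j) (hε0 i) (hε0 j)).trans ?_
  rw [covariance_comp_comp_of_iIndepFun hXm hXindep hν hφ₁ hφ₂ hφ₁' hφ₂', hεε]
  split_ifs with hij
  · subst hij
    rw [mul_one, ← hν i, integral_map (hXm i).aemeasurable (hν i ▸ (hψ₁'.1.mul hψ₂'.1))]
    rfl
  · rw [mul_zero, add_zero]

end Regression

/-- Covariance structure of the sequential empirical process (at s = 1) in the
regression changepoint example:
`E[α_n(1,z₁) α_n(1,z₂)] = H₁(z₁∧z₂) + H₂(z₁∧z₂) − G₁(z₁) G₁(z₂)`. -/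
theorem stmt_10
    {Ω : Type*} [MeasurableSpace Ω] (P : Measure Ω) [IsProbabilityMeasure P]
    (d : ℕ) (X : ℤ → Ω → (Fin d → ℝ)) (hXm : ∀ t, Measurable (X t))
    -- i.i.d. regressors
    (hXid : ∀ t : ℤ, Measure.map (X t) P = Measure.map (X 0) P)
    (hXindep : ProbabilityTheory.iIndepFun X P)
    (ε : ℤ → Ω → ℝ) (hεm : ∀ t, Measurable (ε t))
    -- strict stationarity of the innovations
    (hstat : ∀ (m : ℕ) (t : Fin m → ℤ) (k : ℤ),
      Measure.map (fun ω (r : Fin m) => ε (t r + k) ω) P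
        = Measure.map (fun ω (r : Fin m) => ε (t r) ω) P)
    -- mutual independence of the regressors and the innovations
    (hindep : ProbabilityTheory.Indep
      (⨆ t : ℤ, MeasurableSpace.comap (X t) inferInstance)
      (⨆ t : ℤ, MeasurableSpace.comap (ε t) inferInstance) P)
    -- martingale difference property
    (hmds : ∀ t : ℤ,
      P[ε t | ⨆ j : ℤ, ⨆ _ : j ≤ t - 1, MeasurableSpace.comap (ε j) inferInstance]
        =ᵐ[P] fun _ => (0 : ℝ))
    (hL2 : ∀ t : ℤ, Integrable (fun ω => (ε t ω) ^ 2) P)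
    (hε1 : ∫ ω, (ε 1 ω) ^ 2 ∂P = 1)
    (m σ : (Fin d → ℝ) → ℝ) (hm : Measurable m) (hσ : Measurable σ)
    (ν : Measure (Fin d → ℝ)) (hν : ν = Measure.map (X 0) P)
    (hm2 : Integrable (fun u => (m u) ^ 2) ν)
    (hσ2 : Integrable (fun u => (σ u) ^ 2) ν)
    (Y : ℤ → Ω → ℝ) (hY : ∀ t ω, Y t ω = m (X t ω) + σ (X t ω) * ε t ω)
    (A : ℕ → (Fin d → ℝ) → Ω → ℝ)
    (hA : ∀ n z ω, A n z ω = (n : ℝ) ^ (-(1 / 2 : ℝ)) *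
      ∑ i ∈ Finset.Icc 1 n,
        (Y i ω * (if ∀ k, X i ω k ≤ z k then (1 : ℝ) else 0)
          - ∫ ω', Y i ω' * (if ∀ k, X i ω' k ≤ z k then (1 : ℝ) else 0) ∂P)) :
    ∀ n : ℕ, 1 ≤ n → ∀ z₁ z₂ : Fin d → ℝ,
      ∫ ω, A n z₁ ω * A n z₂ ω ∂P =
        (∫ u in {u : Fin d → ℝ | ∀ k, u k ≤ min (z₁ k) (z₂ k)}, (m u) ^ 2 ∂ν)
          + (∫ u in {u : Fin d → ℝ | ∀ k, u k ≤ min (z₁ k) (z₂ k)}, (σ u) ^ 2 ∂ν)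
          - (∫ u in {u : Fin d → ℝ | ∀ k, u k ≤ z₁ k}, m u ∂ν)
            * (∫ u in {u : Fin d → ℝ | ∀ k, u k ≤ z₂ k}, m u ∂ν) := by
  intro n hn z₁ z₂
  have hε2 : ∀ t, MemLp (ε t) 2 P := fun t =>
    (memLp_two_iff_integrable_sq (hεm t).aestronglyMeasurable).2 (hL2 t)
  have hm' : MemLp m 2 ν := (memLp_two_iff_integrable_sq hm.aestronglyMeasurable).2 hm2
  have hσ' : MemLp σ 2 ν := (memLp_two_iff_integrable_sq hσ.aestronglyMeasurable).2 hσ2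
  have : IsProbabilityMeasure ν := hν ▸ Measure.isProbabilityMeasure_map (hXm 0).aemeasurable
  have hν' : ∀ t, P.map (X t) = ν := fun t => (hXid t).trans hν.symm
  have hI : ∀ z : Fin d → ℝ, MeasurableSet {u : Fin d → ℝ | ∀ k, u k ≤ z k} :=
    fun _ => measurableSet_Iic
  have hmin : {u | ∀ k, u k ≤ z₁ k} ∩ {u | ∀ k, u k ≤ z₂ k}
      = {u : Fin d → ℝ | ∀ k, u k ≤ min (z₁ k) (z₂ k)} := by
    ext u; simp [forall_and]
  simp only [hA, hY, add_mul_mul_ite_eq_indicator]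
  rw [show (n : ℝ) = #(Icc 1 n) by simp]
  refine integral_normalized_sum_mul_of_covariance_eq_ite
    (f := fun (i : ℕ) ω => {u | ∀ k, u k ≤ z₁ k}.indicator m (X i ω)
      + {u | ∀ k, u k ≤ z₁ k}.indicator σ (X i ω) * ε i ω)
    (g := fun (j : ℕ) ω => {u | ∀ k, u k ≤ z₂ k}.indicator m (X j ω)
      + {u | ∀ k, u k ≤ z₂ k}.indicator σ (X j ω) * ε j ω)
    (s := Icc 1 n) ⟨1, by simpa using hn⟩
    (fun i _ => memLp_regression_summand hXm hν' hindep hε2 (hσ.indicator (hI z₁))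
      (hm'.indicator (hI z₁)) (hσ'.indicator (hI z₁)) i)
    (fun j _ => memLp_regression_summand hXm hν' hindep hε2 (hσ.indicator (hI z₂))
      (hm'.indicator (hI z₂)) (hσ'.indicator (hI z₂)) j) fun i _ j _ => ?_
  rw [covariance_regression_summands hXm hXindep hν' hindep hε2
      (integral_eq_zero_of_mds hεm hmds)
      (fun s t => by rw [integral_mul_eq_ite_of_stationary_mds hεm hstat hmds hε2, hε1])
      (hm.indicator (hI z₁)) (hm.indicator (hI z₂)) (hσ.indicator (hI z₁))
      (hσ.indicator (hI z₂)) (hm'.indicator (hI z₁)) (hm'.indicator (hI z₂))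
      (hσ'.indicator (hI z₁)) (hσ'.indicator (hI z₂)),
    covariance_indicator_indicator (hI z₁) (hI z₂) hm',
    integral_indicator_mul_indicator (hI z₁) (hI z₂), hmin]
  simp only [Nat.cast_inj]
  split_ifs <;> ring
end
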